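/- arXiv:2111.02361 — 5 statements merged into one kernel-verified Lean document; each statement's English description precedes it below -/
import Mathlib

section
/- Let G = (V,E) be an undirected graph with nonnegative edge weights, and let δ(X) denote the total weight of edges with exactly one endpoint in X. Call a nonempty set X ⊊ V extreme if for every nonempty proper subset Y ⊊ X we have δ(Y) > δ(X). Then the extreme sets of G form a laminar family: for any two extreme sets X and Y, either X ⊆ Y, or Y ⊆ X, or X ∩ Y = ∅. -/
open Finset

variable {V : Type*} [Fintype V] [DecidableEq V]

/-- The cut value of a vertex set `X`: total weight of edges with exactly one endpoint in `X`. -/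
def cutVal (w : V → V → ℝ) (X : Finset V) : ℝ := ∑ u ∈ X, ∑ v ∈ Xᶜ, w u v

/-- A nonempty proper vertex set `X` is extreme if every nonempty proper subset has
strictly larger cut value. -/
def IsExtremeSet (w : V → V → ℝ) (X : Finset V) : Prop :=
  X.Nonempty ∧ X ≠ Finset.univ ∧
    ∀ Y : Finset V, Y.Nonempty → Y ⊂ X → cutVal w X < cutVal w Y

/-!
Posimodularity `δ(X \ Y) + δ(Y \ X) ≤ δ(X) + δ(Y)` is the whole argument: if two extreme sets
`X`, `Y` crossed, then `X \ Y` and `Y \ X` would be nonempty proper subsets of `X` and `Y`, so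
`δ(X) < δ(X \ Y)` and `δ(Y) < δ(Y \ X)`, and adding these contradicts posimodularity.
Posimodularity itself is checked one ordered pair of vertices at a time, after writing `2 δ(X)`
as the total weight of the pairs that `X` separates.
-/

lemma cutVal_eq_sum_ite (w : V → V → ℝ) (X : Finset V) :
    cutVal w X = ∑ u, ∑ v, if u ∈ X ∧ v ∉ X then w u v else 0 := by
  simp only [cutVal, ite_and, ← mem_compl, sum_ite_irrel, sum_const_zero, Fintype.sum_ite_mem]

lemma two_mul_cutVal (w : V → V → ℝ) (hsymm : ∀ u v, w u v = w v u) (X : Finset V) :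
    2 * cutVal w X = ∑ u, ∑ v, if (u ∈ X ↔ v ∈ X) then 0 else w u v := by
  have hswap : cutVal w X = ∑ u, ∑ v, if v ∈ X ∧ u ∉ X then w u v else 0 := by
    rw [cutVal_eq_sum_ite, sum_comm]
    simp only [hsymm]
  rw [two_mul]
  nth_rw 1 [cutVal_eq_sum_ite]
  rw [hswap, ← sum_add_distrib]
  refine sum_congr rfl fun u _ => ?_
  rw [← sum_add_distrib]
  refine sum_congr rfl fun v _ => ?_
  by_cases hu : u ∈ X <;> by_cases hv : v ∈ X <;> simp [hu, hv]

lemma cutVal_sdiff_add_cutVal_sdiff_le (w : V → V → ℝ) (hsymm : ∀ u v, w u v = w v u)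
    (hnonneg : ∀ u v, 0 ≤ w u v) (X Y : Finset V) :
    cutVal w (X \ Y) + cutVal w (Y \ X) ≤ cutVal w X + cutVal w Y := by
  suffices 2 * cutVal w (X \ Y) + 2 * cutVal w (Y \ X) ≤ 2 * cutVal w X + 2 * cutVal w Y by
    linarith
  simp only [two_mul_cutVal w hsymm, ← sum_add_distrib]
  refine sum_le_sum fun u _ => sum_le_sum fun v _ => ?_
  have := hnonneg u v
  by_cases hxu : u ∈ X <;> by_cases hyu : u ∈ Y <;> by_cases hxv : v ∈ X <;>
    by_cases hyv : v ∈ Y <;> simp [hxu, hyu, hxv, hyv, this]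

lemma IsExtremeSet.cutVal_lt_cutVal_sdiff {w : V → V → ℝ} {X : Finset V}
    (hX : IsExtremeSet w X) (Y : Finset V) (hXY : ¬X ⊆ Y) (hmeet : (X ∩ Y).Nonempty) :
    cutVal w X < cutVal w (X \ Y) := by
  refine hX.2.2 _ (sdiff_nonempty.mpr hXY) (Finset.ssubset_iff_subset_ne.mpr ⟨sdiff_subset, ?_⟩)
  rw [Ne, Finset.sdiff_eq_self_iff_disjoint, disjoint_iff_inter_eq_empty]
  exact hmeet.ne_empty

/-- The extreme sets of a weighted undirected graph form a laminar family. -/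
theorem extreme_sets_laminar (w : V → V → ℝ)
    (hsymm : ∀ u v, w u v = w v u) (hnonneg : ∀ u v, 0 ≤ w u v)
    (X Y : Finset V) (hX : IsExtremeSet w X) (hY : IsExtremeSet w Y) :
    X ⊆ Y ∨ Y ⊆ X ∨ X ∩ Y = ∅ := by
  by_contra! h
  obtain ⟨hXY, hYX, hmeet⟩ := h
  have hX' := hX.cutVal_lt_cutVal_sdiff Y hXY hmeet
  have hY' := hY.cutVal_lt_cutVal_sdiff X hYX (by rwa [inter_comm])
  linarith [cutVal_sdiff_add_cutVal_sdiff_le w hsymm hnonneg X Y]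
end

section
/- Let G be a finite weighted undirected graph. If every extreme set X of G satisfies δ(X) ≥ τ, then every nonempty proper subset U ⊊ V satisfies δ(U) ≥ τ, i.e., the global minimum cut of G has value at least τ. -/
open Finset

variable {V : Type*} [Fintype V] [DecidableEq V]

theorem exists_isExtremeSet_subset_cutVal_le (w : V → V → ℝ) (U : Finset V)
    (hne : U.Nonempty) (huniv : U ≠ univ) :
    ∃ X ⊆ U, IsExtremeSet w X ∧ cutVal w X ≤ cutVal w U := by
  induction U using Finset.strongInduction with
  | H U ih =>
    by_cases hU : IsExtremeSet w U
    · exact ⟨U, subset_rfl, hU, le_rfl⟩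
    obtain ⟨Y, hYne, hYU, hYle⟩ :
        ∃ Y : Finset V, Y.Nonempty ∧ Y ⊂ U ∧ cutVal w Y ≤ cutVal w U := by
      simpa [IsExtremeSet, hne, huniv] using hU
    have hYuniv : Y ≠ univ := fun h => huniv (univ_subset_iff.mp (h ▸ hYU.subset))
    obtain ⟨X, hXY, hX, hXle⟩ := ih Y hYU hYne hYuniv
    exact ⟨X, hXY.trans hYU.subset, hX, hXle.trans hYle⟩

theorem minCut_ge_of_extreme_ge_general (w : V → V → ℝ) (τ : ℝ)
    (hext : ∀ X : Finset V, IsExtremeSet w X → τ ≤ cutVal w X) :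
    ∀ U : Finset V, U.Nonempty → U ≠ Finset.univ → τ ≤ cutVal w U := by
  intro U hne huniv
  obtain ⟨X, -, hX, hXle⟩ := exists_isExtremeSet_subset_cutVal_le w U hne huniv
  exact (hext X hX).trans hXle

/-- If every extreme set has cut value at least `τ`, then every nonempty proper
vertex set has cut value at least `τ`, i.e. the global min cut is at least `τ`. -/
theorem minCut_ge_of_extreme_ge (w : V → V → ℝ)
    (hsymm : ∀ u v, w u v = w v u) (hnonneg : ∀ u v, 0 ≤ w u v)
    (hcard : 2 ≤ Fintype.card V) (τ : ℝ)
    (hext : ∀ X : Finset V, IsExtremeSet w X → τ ≤ cutVal w X) :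
    ∀ U : Finset V, U.Nonempty → U ≠ Finset.univ → τ ≤ cutVal w U :=
  minCut_ge_of_extreme_ge_general w τ hext
end

section
/- (Isolation Lemma) Let m and N be positive integers and let F be a nonempty collection of subsets of {1,...,m}. Suppose each element x ∈ {1,...,m} independently receives a value r(x) uniformly at random from {1,...,N}. Then with probability at least 1 − m/N, there is a unique set S ∈ F minimizing Σ_{x∈S} r(x). -/
open Finset
open scoped Classical

/-!
If two minimum-weight sets `S, T ∈ F` differ, some `x` lies in one and not the other. For such an
`x` the weight `r x` is pinned down by the other weights: both the minimum over sets avoiding `x`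
and the minimum of `r(S \ {x})` over sets `S ∋ x` ignore `r x`, and ambiguity at `x` forces
`r x` to be their difference. Hence ambiguity at a fixed `x` has probability at most `1/N`, and
a union bound over the `m` elements gives the claim.
-/

section MinWeight

variable {α M : Type*} [AddCommMonoid M] [LinearOrder M]

def IsMinWeight (F : Finset (Finset α)) (w : α → M) (S : Finset α) : Prop :=
  S ∈ F ∧ ∀ T ∈ F, ∑ y ∈ S, w y ≤ ∑ y ∈ T, w y

def MinimizersDisagreeAt (F : Finset (Finset α)) (w : α → M) (x : α) : Prop :=
  ∃ S T, IsMinWeight F w S ∧ IsMinWeight F w T ∧ x ∈ S ∧ x ∉ T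

variable {F : Finset (Finset α)} {w w' : α → M} {S T : Finset α} {x : α}

theorem IsMinWeight.sum_eq (hS : IsMinWeight F w S) (hT : IsMinWeight F w T) :
    ∑ y ∈ S, w y = ∑ y ∈ T, w y :=
  le_antisymm (hS.2 T hT.1) (hT.2 S hS.1)

theorem exists_minimizersDisagreeAt_of_not_existsUnique (hF : F.Nonempty)
    (h : ¬ ∃! S, IsMinWeight F w S) : ∃ x, MinimizersDisagreeAt F w x := by
  obtain ⟨S, hSF, hSmin⟩ := F.exists_min_image (fun S => ∑ y ∈ S, w y) hF
  have hS : IsMinWeight F w S := ⟨hSF, hSmin⟩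
  obtain ⟨T, hT, hTS⟩ : ∃ T, IsMinWeight F w T ∧ T ≠ S := by
    by_contra! hcon
    exact h ⟨S, hS, hcon⟩
  by_cases hST : S ⊆ T
  · obtain ⟨x, hxT, hxS⟩ := not_subset.mp fun hTS' => hTS (hTS'.antisymm hST)
    exact ⟨x, T, S, hT, hS, hxT, hxS⟩
  · obtain ⟨x, hxS, hxT⟩ := not_subset.mp hST
    exact ⟨x, S, T, hS, hT, hxS, hxT⟩

variable [IsOrderedCancelAddMonoid M]

theorem MinimizersDisagreeAt.apply_eq_of_forall_ne (hw : MinimizersDisagreeAt F w x)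
    (hw' : MinimizersDisagreeAt F w' x) (hww' : ∀ y, y ≠ x → w y = w' y) : w x = w' x := by
  classical
  obtain ⟨S, T, hS, hT, hxS, hxT⟩ := hw
  obtain ⟨S', T', hS', hT', hxS', hxT'⟩ := hw'
  have sum_eq : ∀ U : Finset α, x ∉ U → ∑ y ∈ U, w y = ∑ y ∈ U, w' y := fun U hU =>
    sum_congr rfl fun y hy => hww' y (ne_of_mem_of_not_mem hy hU)
  have hmin : ∑ y ∈ T, w y = ∑ y ∈ T', w' y := le_antisymm
    ((hT.2 T' hT'.1).trans_eq (sum_eq T' hxT'))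
    ((hT'.2 T hT.1).trans_eq (sum_eq T hxT).symm)
  have hrest : ∑ y ∈ S.erase x, w y = ∑ y ∈ S'.erase x, w' y := by
    have h₁ := hS.2 S' hS'.1
    have h₂ := hS'.2 S hS.1
    rw [← add_sum_erase S w hxS, ← add_sum_erase S' w hxS', add_le_add_iff_left,
      sum_eq _ (notMem_erase x S')] at h₁
    rw [← add_sum_erase S w' hxS, ← add_sum_erase S' w' hxS', add_le_add_iff_left,
      ← sum_eq _ (notMem_erase x S)] at h₂
    exact le_antisymm h₁ h₂
  refine add_right_cancel (b := ∑ y ∈ S.erase x, w y) ?_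
  calc w x + ∑ y ∈ S.erase x, w y = ∑ y ∈ T', w' y := by
        rw [add_sum_erase S w hxS, hS.sum_eq hT, hmin]
    _ = w' x + ∑ y ∈ S.erase x, w y := by
        rw [hrest, add_sum_erase S' w' hxS', hS'.sum_eq hT']

end MinWeight

section Counting

variable {α β : Type*} [Fintype α] [Fintype β]

theorem card_mul_card_le_of_apply_eq_of_forall_ne (x : α) {s : Finset (α → β)}
    (hs : ∀ f ∈ s, ∀ g ∈ s, (∀ y, y ≠ x → f y = g y) → f x = g x) :
    #s * Fintype.card β ≤ Fintype.card β ^ Fintype.card α := by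
  classical
  have hinj : #s ≤ Fintype.card ({y // y ≠ x} → β) := by
    refine card_le_card_of_injOn (t := univ) (fun f y => f y) (fun _ _ => mem_univ _) ?_
    intro f hf g hg hfg
    have hne : ∀ y, y ≠ x → f y = g y := fun y hy => congrFun hfg ⟨y, hy⟩
    funext y
    by_cases hy : y = x
    · exact hy ▸ hs f hf g hg hne
    · exact hne y hy
  calc #s * Fintype.card β ≤ Fintype.card ({y // y ≠ x} → β) * Fintype.card β := by gcongr
    _ = Fintype.card β ^ Fintype.card α := by
      rw [← Fintype.card_fun, mul_comm, ← Fintype.card_prod,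
        ← Fintype.card_congr (Equiv.piSplitAt x fun _ => β)]

variable {M : Type*} [AddCommMonoid M] [LinearOrder M] [IsOrderedCancelAddMonoid M]

theorem card_not_existsUnique_isMinWeight_mul_le {F : Finset (Finset α)} (hF : F.Nonempty)
    {φ : β → M} (hφ : Function.Injective φ) :
    #{f : α → β | ¬ ∃! S, IsMinWeight F (φ ∘ f) S} * Fintype.card β ≤
      Fintype.card α * Fintype.card β ^ Fintype.card α := by
  have hcover : ({f : α → β | ¬ ∃! S, IsMinWeight F (φ ∘ f) S} : Finset _) ⊆
      univ.biUnion fun x => ({f : α → β | MinimizersDisagreeAt F (φ ∘ f) x} : Finset _) := by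
    intro f hf
    simp only [mem_filter, mem_univ, true_and, mem_biUnion] at hf ⊢
    exact exists_minimizersDisagreeAt_of_not_existsUnique hF hf
  calc _ ≤ ∑ x, #{f : α → β | MinimizersDisagreeAt F (φ ∘ f) x} * Fintype.card β := by
        rw [← sum_mul]
        gcongr
        exact (card_le_card hcover).trans card_biUnion_le
    _ ≤ ∑ _x : α, Fintype.card β ^ Fintype.card α := by
        gcongr with x
        refine card_mul_card_le_of_apply_eq_of_forall_ne x fun f hf g hg hfg => hφ ?_
        simp only [mem_filter, mem_univ, true_and] at hf hg
        exact hf.apply_eq_of_forall_ne hg fun y hy => congrArg φ (hfg y hy)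
    _ = _ := by simp

end Counting

theorem isolation_lemma_general (m N : ℕ) (hN : 0 < N)
    (F : Finset (Finset (Fin m))) (hF : F.Nonempty) :
    (1 - (m : ℝ) / N) * (N : ℝ) ^ m ≤
      (((Finset.univ : Finset (Fin m → Fin N)).filter
        (fun f => ∃! S : Finset (Fin m), S ∈ F ∧
          ∀ T ∈ F, ∑ x ∈ S, ((f x : ℕ) + 1) ≤ ∑ x ∈ T, ((f x : ℕ) + 1))).card : ℝ) := by
  set good : Finset _ :=
    {f : Fin m → Fin N | ∃! S, IsMinWeight F ((fun i : Fin N => (i : ℕ) + 1) ∘ f) S}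
  set bad : Finset _ :=
    {f : Fin m → Fin N | ¬ ∃! S, IsMinWeight F ((fun i : Fin N => (i : ℕ) + 1) ∘ f) S}
  have hsplit : (#good : ℝ) + #bad = (N : ℝ) ^ m := by
    exact_mod_cast (card_filter_add_card_filter_not _).trans (by simp)
  have hbad : (#bad : ℝ) * N ≤ m * (N : ℝ) ^ m := by
    have := card_not_existsUnique_isMinWeight_mul_le (α := Fin m) hF
      (φ := fun i : Fin N => (i : ℕ) + 1) fun i j hij => Fin.ext (Nat.add_right_cancel hij)
    simp only [Fintype.card_fin] at this
    exact_mod_cast (by convert this : #bad * N ≤ m * N ^ m)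
  have hNpos : (0 : ℝ) < N := by exact_mod_cast hN
  change _ ≤ (#good : ℝ)
  calc (1 - (m : ℝ) / N) * (N : ℝ) ^ m = (N : ℝ) ^ m - m * (N : ℝ) ^ m / N := by ring
    _ ≤ (N : ℝ) ^ m - #bad := by gcongr; exact (le_div_iff₀ hNpos).mpr hbad
    _ = #good := by linarith

/-- The Isolation Lemma: if each element of `{1,…,m}` receives an independent
uniformly random value in `{1,…,N}`, then with probability at least `1 - m/N`
there is a unique set in the family `F` of minimum total value. Stated in
counting form over the uniform sample space of all `N^m` assignments
(`f x` encodes the value `(f x : ℕ) + 1 ∈ {1,…,N}`). -/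
theorem isolation_lemma (m N : ℕ) (hm : 0 < m) (hN : 0 < N)
    (F : Finset (Finset (Fin m))) (hF : F.Nonempty) :
    (1 - (m : ℝ) / N) * (N : ℝ) ^ m ≤
      (((Finset.univ : Finset (Fin m → Fin N)).filter
        (fun f => ∃! S : Finset (Fin m), S ∈ F ∧
          ∀ T ∈ F, ∑ x ∈ S, ((f x : ℕ) + 1) ≤ ∑ x ∈ T, ((f x : ℕ) + 1))).card : ℝ) :=
  isolation_lemma_general m N hN F hF
end

section
/- Let G = (V,E) be a weighted undirected graph, s ∈ V, and t, t' ∈ V\{s}. If λ_w(s,t) < λ_w(s,t') under integer weights w, then also λ_{w'}(s,t) < λ_{w'}(s,t') under the perturbed weights w'(e) = mN·w(e) + r(e) with 1 ≤ r(e) ≤ N. In particular, the perturbation preserves all strict inequalities between pairwise connectivities to s. -/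
open Finset
open scoped Classical

variable {V E : Type*} [Fintype V] [Fintype E] [DecidableEq V]

def Crosses (ends : E → V × V) (e : E) (X : Finset V) : Prop :=
  ((ends e).1 ∈ X) ≠ ((ends e).2 ∈ X)

noncomputable def cutE (ends : E → V × V) (w : E → ℤ) (X : Finset V) : ℤ :=
  ∑ e ∈ Finset.univ.filter (fun e => Crosses ends e X), w e

/-- The minimum `s`-`t` cut value under edge weights `w`. -/
noncomputable def lamE (ends : E → V × V) (w : E → ℤ) (s t : V) : ℝ :=
  sInf {x : ℝ | ∃ Z : Finset V, t ∈ Z ∧ s ∉ Z ∧ (cutE ends w Z : ℝ) = x}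

/-! The perturbation `w' = mN·w + r` scales every cut value by `mN` and adds the
`r`-weight of the cut, which lies in `[1, mN]` for a crossed cut. So a gap of at least `1`
between `w`-cut values, i.e. of at least `mN` after scaling, cannot be closed by the
perturbation. A minimum `s`-`t` cut `X` under `w` is thus strictly lighter under `w'` than every
`s`-`t'` cut, in particular than a minimum one under `w'`. -/

section Cut

omit [Fintype V] [DecidableEq V]

variable (ends : E → V × V)

theorem cutE_mul_add (c : ℤ) (w r : E → ℤ) (X : Finset V) :
    cutE ends (fun e => c * w e + r e) X = c * cutE ends w X + cutE ends r X := by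
  simp only [cutE, Finset.sum_add_distrib, Finset.mul_sum]

theorem cutE_le_card_mul {r : E → ℤ} {N : ℤ} (hN : 0 ≤ N) (hr : ∀ e, r e ≤ N) (X : Finset V) :
    cutE ends r X ≤ Fintype.card E * N :=
  calc cutE ends r X ≤ #(univ.filter fun e => Crosses ends e X) • N :=
        Finset.sum_le_card_nsmul _ _ _ fun e _ => hr e
    _ ≤ Fintype.card E * N := by
        rw [nsmul_eq_mul]
        gcongr
        exact_mod_cast Finset.card_filter_le _ _

theorem one_le_cutE {r : E → ℤ} (hr : ∀ e, 1 ≤ r e) {X : Finset V} {e : E}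
    (he : Crosses ends e X) : 1 ≤ cutE ends r X :=
  (hr e).trans <| Finset.single_le_sum (fun e _ => zero_le_one.trans (hr e)) (by simpa using he)

theorem cutE_perturb_lt_of_lt {w r : E → ℤ} {N : ℤ} (hr : ∀ e, 1 ≤ r e ∧ r e ≤ N)
    {X Y : Finset V} {e : E} (he : Crosses ends e Y) (h : cutE ends w X < cutE ends w Y) :
    cutE ends (fun e => (Fintype.card E : ℤ) * N * w e + r e) X
      < cutE ends (fun e => (Fintype.card E : ℤ) * N * w e + r e) Y := by
  have hN : 0 ≤ N := zero_le_one.trans ((hr e).1.trans (hr e).2)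
  have hX := cutE_le_card_mul ends hN (fun e => (hr e).2) X
  have hY := one_le_cutE ends (fun e => (hr e).1) he
  have hmN : 0 ≤ (Fintype.card E : ℤ) * N := by positivity
  rw [cutE_mul_add, cutE_mul_add]
  calc _ ≤ (Fintype.card E : ℤ) * N * (cutE ends w X + 1) := by linarith
    _ ≤ (Fintype.card E : ℤ) * N * cutE ends w Y := by gcongr; exact h
    _ < _ := by linarith

end Cut

section MinCut

omit [DecidableEq V]

variable (ends : E → V × V) (w : E → ℤ) {s t : V}

theorem finite_cutE_values :
    {x : ℝ | ∃ Z : Finset V, t ∈ Z ∧ s ∉ Z ∧ (cutE ends w Z : ℝ) = x}.Finite :=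
  (Set.finite_range fun Z : Finset V => (cutE ends w Z : ℝ)).subset
    fun _ ⟨Z, _, _, hZ⟩ => ⟨Z, hZ⟩

theorem lamE_le_cutE {Z : Finset V} (ht : t ∈ Z) (hs : s ∉ Z) :
    lamE ends w s t ≤ cutE ends w Z :=
  csInf_le (finite_cutE_values ends w).bddBelow ⟨Z, ht, hs, rfl⟩

theorem exists_cutE_eq_lamE (ht : t ≠ s) :
    ∃ Z : Finset V, t ∈ Z ∧ s ∉ Z ∧ (cutE ends w Z : ℝ) = lamE ends w s t :=
  Set.Nonempty.csInf_mem (s := {x : ℝ | ∃ Z : Finset V, t ∈ Z ∧ s ∉ Z ∧ (cutE ends w Z : ℝ) = x})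
    ⟨_, {t}, mem_singleton_self t, by simpa using ht.symm, rfl⟩ (finite_cutE_values ends w)

end MinCut

theorem perturbation_preserves_strict_connectivity_inequalities_general
    (ends : E → V × V) (w r : E → ℤ) (N : ℤ)
    (hr : ∀ e, 1 ≤ r e ∧ r e ≤ N)
    (hconn : ∀ X : Finset V, X.Nonempty → X ≠ Finset.univ → ∃ e, Crosses ends e X)
    (s t t' : V) (ht : t ≠ s) (ht' : t' ≠ s)
    (hlt : lamE ends w s t < lamE ends w s t') :
    lamE ends (fun e => (Fintype.card E : ℤ) * N * w e + r e) s t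
      < lamE ends (fun e => (Fintype.card E : ℤ) * N * w e + r e) s t' := by
  set w' : E → ℤ := fun e => (Fintype.card E : ℤ) * N * w e + r e
  obtain ⟨X, htX, hsX, hX⟩ := exists_cutE_eq_lamE ends w ht
  obtain ⟨Y, htY, hsY, hY⟩ := exists_cutE_eq_lamE ends w' ht'
  obtain ⟨e, he⟩ := hconn Y ⟨t', htY⟩ fun hY => hsY (hY ▸ mem_univ s)
  have hXY : cutE ends w X < cutE ends w Y := by
    exact_mod_cast hX ▸ hlt.trans_le (lamE_le_cutE ends w htY hsY)
  calc lamE ends w' s t ≤ cutE ends w' X := lamE_le_cutE ends w' htX hsX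
    _ < cutE ends w' Y := by exact_mod_cast cutE_perturb_lt_of_lt ends hr he hXY
    _ = lamE ends w' s t' := hY

/-- The perturbation `w'(e) = mN·w(e) + r(e)` preserves all strict inequalities
between pairwise connectivities to `s`. -/
theorem perturbation_preserves_strict_connectivity_inequalities
    (ends : E → V × V) (w r : E → ℤ) (N : ℤ) (hN : 1 ≤ N)
    (hw : ∀ e, 1 ≤ w e) (hr : ∀ e, 1 ≤ r e ∧ r e ≤ N)
    (hconn : ∀ X : Finset V, X.Nonempty → X ≠ Finset.univ → ∃ e, Crosses ends e X)
    (s t t' : V) (ht : t ≠ s) (ht' : t' ≠ s)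
    (hlt : lamE ends w s t < lamE ends w s t') :
    lamE ends (fun e => (Fintype.card E : ℤ) * N * w e + r e) s t
      < lamE ends (fun e => (Fintype.card E : ℤ) * N * w e + r e) s t' :=
  perturbation_preserves_strict_connectivity_inequalities_general ends w r N hr hconn s t t' ht ht'
    hlt
end

section
/- Let G = (V,E) be a weighted undirected graph with a vertex s, and suppose for all t ∈ V\{s} the minimum s–t cut is unique, and additionally whenever λ(s,t) = λ(s,t') for t ≠ t', these unique minimum cuts coincide. Fix s, and order V\{s} as a sequence Λ(s) in non-increasing order of λ(s,·); a 'run' is a maximal block of consecutive vertices with equal λ(s,·) value. If every run in Λ(s) has length ≤ 3|V|/4, and t is the vertex at position p in Λ(s) with 7|V|/8 ≤ p ≤ 15|V|/16, then setting φ := λ(s,t), the cut threshold satisfies |V|/16 ≤ |ct(s,φ)| ≤ 7|V|/8. -/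
open Finset
open scoped Classical

variable {V : Type*} [Fintype V] [DecidableEq V]

noncomputable def lam (w : V → V → ℝ) (s t : V) : ℝ :=
  sInf {x : ℝ | ∃ Z : Finset V, t ∈ Z ∧ s ∉ Z ∧ cutVal w Z = x}

noncomputable def ct (w : V → V → ℝ) (s : V) (φ : ℝ) : Finset V :=
  Finset.univ.filter (fun t => t ≠ s ∧ lam w s t ≤ φ)

/-! Since `Λ(s)` is non-increasing, the vertices with `λ(s,·) ≤ φ = λ(s,t)` are exactly the
suffix of `Λ(s)` starting at `t` together with the run of `t`. With `t` at position `p`, the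
suffix has `|V| - p` vertices, between `|V|/16` and `|V|/8`, and the run at most `3|V|/4`. -/

theorem Antitone.filter_le_eq_Ici_union {ι α : Type*} [Fintype ι] [LinearOrder ι]
    [LocallyFiniteOrderTop ι] [LinearOrder α] {g : ι → α} (hg : Antitone g) (p : ι) :
    univ.filter (fun i => g i ≤ g p) = Ici p ∪ univ.filter (fun i => g i = g p) := by
  ext i
  simp only [mem_filter, mem_univ, true_and, mem_union, mem_Ici]
  constructor
  · intro hi
    rcases le_or_gt p i with hpi | hip
    · exact Or.inl hpi
    · exact Or.inr (le_antisymm hi (hg hip.le))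
  · rintro (hpi | hi)
    · exact hg hpi
    · exact hi.le

theorem Fin.cast_card_Ici_pred {N : ℕ} (p : Fin (N - 1)) :
    (#(Ici p) : ℝ) = N - ((p : ℝ) + 1) := by
  have hp := p.isLt
  rw [Fin.card_Ici, Nat.cast_sub hp.le, Nat.cast_pred (by omega)]
  ring

theorem image_univ_eq_erase_of_injective {s : V} {e : Fin (Fintype.card V - 1) → V}
    (he : Function.Injective e) (hs : ∀ i, e i ≠ s) : univ.image e = univ.erase s := by
  refine eq_of_subset_of_card_le (fun t ht => ?_) ?_
  · obtain ⟨i, -, rfl⟩ := mem_image.mp ht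
    exact mem_erase.mpr ⟨hs i, mem_univ _⟩
  · rw [card_image_of_injective _ he, card_erase_of_mem (mem_univ s), card_univ, card_univ,
      Fintype.card_fin]

theorem card_ct_eq_card_filter (w : V → V → ℝ) {s : V} {seq : Fin (Fintype.card V - 1) → V}
    (hinj : Function.Injective seq) (hns : ∀ i, seq i ≠ s) (φ : ℝ) :
    #(ct w s φ) = #(univ.filter fun i => lam w s (seq i) ≤ φ) := by
  have hct : ct w s φ = (univ.filter fun i => lam w s (seq i) ≤ φ).image seq := calc
    ct w s φ = (univ.erase s).filter (fun t => lam w s t ≤ φ) := by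
      ext t; simp [ct]
    _ = (univ.image seq).filter (fun t => lam w s t ≤ φ) := by
      rw [image_univ_eq_erase_of_injective hinj hns]
    _ = _ := filter_image
  rw [hct, card_image_of_injective _ hinj]

theorem cut_threshold_balanced_general (w : V → V → ℝ)
    (s : V)
    (seq : Fin (Fintype.card V - 1) → V)
    (hinj : Function.Injective seq) (hns : ∀ i, seq i ≠ s)
    (hmono : ∀ i j : Fin (Fintype.card V - 1), i ≤ j →
      lam w s (seq j) ≤ lam w s (seq i))
    (hrun : ∀ x : ℝ,
      ((Finset.univ.filter (fun i : Fin (Fintype.card V - 1) =>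
        lam w s (seq i) = x)).card : ℝ) ≤ 3 * (Fintype.card V : ℝ) / 4)
    (p : Fin (Fintype.card V - 1))
    (hp1 : 7 * (Fintype.card V : ℝ) / 8 ≤ (p : ℝ) + 1)
    (hp2 : (p : ℝ) + 1 ≤ 15 * (Fintype.card V : ℝ) / 16) :
    (Fintype.card V : ℝ) / 16 ≤ ((ct w s (lam w s (seq p))).card : ℝ) ∧
      ((ct w s (lam w s (seq p))).card : ℝ) ≤ 7 * (Fintype.card V : ℝ) / 8 := by
  have hanti : Antitone fun i => lam w s (seq i) := hmono
  rw [card_ct_eq_card_filter w hinj hns, hanti.filter_le_eq_Ici_union p]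
  set run := univ.filter fun i => lam w s (seq i) = lam w s (seq p)
  have hlow : (#(Ici p) : ℝ) ≤ #(Ici p ∪ run) := by exact_mod_cast card_le_card subset_union_left
  have hup : (#(Ici p ∪ run) : ℝ) ≤ #(Ici p) + #run := by exact_mod_cast card_union_le _ _
  have hrun_p := hrun (lam w s (seq p))
  rw [Fin.cast_card_Ici_pred] at hlow hup
  constructor <;> linarith

/-- If the sequence `Λ(s) = seq` lists the vertices of `V \ {s}` in non-increasing
order of `λ(s,·)`, every run (block of equal `λ(s,·)`-value) has length at most
`3|V|/4`, the minimum `s`-`t` cuts are unique and coincide for vertices with equal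
connectivity, and `t = seq p` sits at a (1-indexed) position between `7|V|/8` and
`15|V|/16`, then with `φ := λ(s,t)` we have `|V|/16 ≤ |ct(s,φ)| ≤ 7|V|/8`. -/
theorem cut_threshold_balanced (w : V → V → ℝ)
    (hsymm : ∀ u v, w u v = w v u) (hnonneg : ∀ u v, 0 ≤ w u v)
    (s : V)
    (huniq : ∀ t : V, t ≠ s →
      ∃! Z : Finset V, t ∈ Z ∧ s ∉ Z ∧ cutVal w Z = lam w s t)
    (hcoincide : ∀ t t' : V, ∀ Z Z' : Finset V, t ≠ s → t' ≠ s →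
      lam w s t = lam w s t' →
      (t ∈ Z ∧ s ∉ Z ∧ cutVal w Z = lam w s t) →
      (t' ∈ Z' ∧ s ∉ Z' ∧ cutVal w Z' = lam w s t') → Z = Z')
    (seq : Fin (Fintype.card V - 1) → V)
    (hinj : Function.Injective seq) (hns : ∀ i, seq i ≠ s)
    (hmono : ∀ i j : Fin (Fintype.card V - 1), i ≤ j →
      lam w s (seq j) ≤ lam w s (seq i))
    (hrun : ∀ x : ℝ,
      ((Finset.univ.filter (fun i : Fin (Fintype.card V - 1) =>
        lam w s (seq i) = x)).card : ℝ) ≤ 3 * (Fintype.card V : ℝ) / 4)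
    (p : Fin (Fintype.card V - 1))
    (hp1 : 7 * (Fintype.card V : ℝ) / 8 ≤ (p : ℝ) + 1)
    (hp2 : (p : ℝ) + 1 ≤ 15 * (Fintype.card V : ℝ) / 16) :
    (Fintype.card V : ℝ) / 16 ≤ ((ct w s (lam w s (seq p))).card : ℝ) ∧
      ((ct w s (lam w s (seq p))).card : ℝ) ≤ 7 * (Fintype.card V : ℝ) / 8 :=
  cut_threshold_balanced_general w s seq hinj hns hmono hrun p hp1 hp2
end
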